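/- Let 0 < s₁ < t₁ and s₂, t₂ ∈ ℝ. Set g = 1 − (t₂ − s₂)/(t₁ − s₁) and h = 1 + s₁ − s₂ − g·s₁, and define c_ST(r) = (g·r + h)/(2·√r). Assume g ≠ 0 and h/g ∈ [s₁,t₁]. Then the supremum of the set { arccos((1 + r₁ − r₂)/(2·√r₁)) : (r₁,r₂) lies on the segment from (s₁,s₂) to (t₁,t₂) } equals arccos( min{ c_ST(s₁), c_ST(t₁), c_ST(h/g) } ). -/

import Mathlib

lemma arccos_anti : Antitone Real.arccos := fun x y hxy => by
  unfold Real.arccos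
  exact sub_le_sub_left (Real.monotone_arcsin hxy) _

lemma aux1 (g h x : ℝ) (hg : 0 < g) (hh : 0 < h) (hx : 0 < x) :
    Real.sqrt g * Real.sqrt h ≤ (g * x ^ 2 + h) / (2 * x) := by
  rw [le_div_iff₀ (by positivity)]
  nlinarith [sq_nonneg (Real.sqrt g * x - Real.sqrt h), Real.sq_sqrt hg.le,
    Real.sq_sqrt hh.le, Real.sqrt_nonneg g, Real.sqrt_nonneg h]

lemma aux2 (g h p x : ℝ) (hp : 0 < p) (hx : p ≤ x) (hc : 0 ≤ g * (x * p) - h) :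
    (g * p ^ 2 + h) / (2 * p) ≤ (g * x ^ 2 + h) / (2 * x) := by
  have hx0 : 0 < x := hp.trans_le hx
  rw [div_le_div_iff₀ (by positivity) (by positivity)]
  nlinarith [mul_nonneg (sub_nonneg.2 hx) hc]

lemma aux3 (g h q x : ℝ) (hx0 : 0 < x) (hx : x ≤ q) (hc : g * (x * q) - h ≤ 0) :
    (g * q ^ 2 + h) / (2 * q) ≤ (g * x ^ 2 + h) / (2 * x) := by
  have hq : 0 < q := hx0.trans_le hx
  rw [div_le_div_iff₀ (by positivity) (by positivity)]
  nlinarith [mul_nonneg (sub_nonneg.2 hx) (neg_nonneg.2 hc)]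

theorem stmt_11 (s₁ t₁ s₂ t₂ : ℝ) (hs : 0 < s₁) (hst : s₁ < t₁) :
    let g : ℝ := 1 - (t₂ - s₂) / (t₁ - s₁)
    let h : ℝ := 1 + s₁ - s₂ - g * s₁
    let cST : ℝ → ℝ := fun r => (g * r + h) / (2 * Real.sqrt r)
    g ≠ 0 → h / g ∈ Set.Icc s₁ t₁ →
      sSup {θ : ℝ | ∃ lam ∈ Set.Icc (0 : ℝ) 1,
          θ = Real.arccos ((1 + ((1 - lam) * s₁ + lam * t₁)
                - ((1 - lam) * s₂ + lam * t₂))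
              / (2 * Real.sqrt ((1 - lam) * s₁ + lam * t₁)))} =
        Real.arccos (min (min (cST s₁) (cST t₁)) (cST (h / g))) := by
  intro g h cST hg hmem
  have hgdef : g = 1 - (t₂ - s₂) / (t₁ - s₁) := rfl
  have hhdef : h = 1 + s₁ - s₂ - g * s₁ := rfl
  have hcdef : ∀ r, cST r = (g * r + h) / (2 * Real.sqrt r) := fun r => rfl
  clear_value cST h g
  have hts : (0 : ℝ) < t₁ - s₁ := sub_pos.2 hst
  have htsne : t₁ - s₁ ≠ 0 := ne_of_gt hts
  set m := min (min (cST s₁) (cST t₁)) (cST (h / g)) with hm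
  -- the algebraic identity
  have hid : ∀ lam : ℝ, (1 + ((1 - lam) * s₁ + lam * t₁) - ((1 - lam) * s₂ + lam * t₂))
      = g * ((1 - lam) * s₁ + lam * t₁) + h := by
    intro lam
    rw [hhdef, hgdef]
    field_simp
    ring
  have hsq : ∀ a : ℝ, 0 ≤ a → cST a = (g * Real.sqrt a ^ 2 + h) / (2 * Real.sqrt a) := by
    intro a ha; rw [hcdef, Real.sq_sqrt ha]
  -- key bound
  have hkey : ∀ r ∈ Set.Icc s₁ t₁, m ≤ cST r := by
    rintro r ⟨h1, h2⟩
    have hr0 : 0 < r := hs.trans_le h1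
    have hxl : Real.sqrt s₁ ≤ Real.sqrt r := Real.sqrt_le_sqrt h1
    have hxu : Real.sqrt r ≤ Real.sqrt t₁ := Real.sqrt_le_sqrt h2
    have hps : 0 < Real.sqrt s₁ := Real.sqrt_pos.2 hs
    have hpr : 0 < Real.sqrt r := Real.sqrt_pos.2 hr0
    rcases lt_or_gt_of_ne hg with hgneg | hgpos
    · rcases le_or_gt 0 (g * (Real.sqrt r * Real.sqrt s₁) - h) with hc | hc
      · calc m ≤ cST s₁ := (min_le_left _ _).trans (min_le_left _ _)
          _ ≤ cST r := by
            rw [hsq s₁ hs.le, hsq r hr0.le]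
            exact aux2 g h _ _ hps hxl hc
      · have hc' : g * (Real.sqrt r * Real.sqrt t₁) - h ≤ 0 := by
          nlinarith [mul_nonneg (mul_nonneg (neg_nonneg.2 hgneg.le) hpr.le)
            (sub_nonneg.2 (hxl.trans hxu))]
        calc m ≤ cST t₁ := (min_le_left _ _).trans (min_le_right _ _)
          _ ≤ cST r := by
            rw [hsq t₁ (hs.trans hst).le, hsq r hr0.le]
            exact aux3 g h _ _ hpr hxu hc'
    · have hdiv : 0 < h / g := hs.trans_le hmem.1
      have hh0 : 0 < h := by
        have := div_mul_cancel₀ h hg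
        nlinarith [mul_pos hdiv hgpos]
      have hsg : 0 < Real.sqrt g := Real.sqrt_pos.2 hgpos
      have hsh : 0 < Real.sqrt h := Real.sqrt_pos.2 hh0
      have hval : cST (h / g) = Real.sqrt g * Real.sqrt h := by
        have h1 : Real.sqrt (h / g) = Real.sqrt h / Real.sqrt g := by
          rw [show h / g = (Real.sqrt h / Real.sqrt g) ^ 2 by
            rw [div_pow, Real.sq_sqrt hh0.le, Real.sq_sqrt hgpos.le]]
          exact Real.sqrt_sq (by positivity)
        have h2 : h + h = 2 * (Real.sqrt h * Real.sqrt h) := by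
          rw [Real.mul_self_sqrt hh0.le]; ring
        rw [hcdef, mul_div_cancel₀ _ hg, h1, h2]
        field_simp
      calc m ≤ cST (h / g) := min_le_right _ _
        _ = Real.sqrt g * Real.sqrt h := hval
        _ ≤ cST r := by
          rw [hsq r hr0.le]
          exact aux1 g h _ hgpos hh0 hpr
  -- upper bound
  have hub : ∀ θ ∈ {θ : ℝ | ∃ lam ∈ Set.Icc (0 : ℝ) 1,
      θ = Real.arccos ((1 + ((1 - lam) * s₁ + lam * t₁) - ((1 - lam) * s₂ + lam * t₂))
        / (2 * Real.sqrt ((1 - lam) * s₁ + lam * t₁)))}, θ ≤ Real.arccos m := by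
    rintro θ ⟨lam, ⟨h0, h1⟩, rfl⟩
    have hrmem : (1 - lam) * s₁ + lam * t₁ ∈ Set.Icc s₁ t₁ := by
      constructor <;> nlinarith
    have := hkey _ hrmem
    rw [hcdef] at this
    rw [hid lam]
    exact arccos_anti this
  -- attainment
  have hattain : ∃ r₀ ∈ Set.Icc s₁ t₁, cST r₀ = m := by
    rcases le_total (min (cST s₁) (cST t₁)) (cST (h / g)) with h1 | h1
    · rcases le_total (cST s₁) (cST t₁) with h2 | h2
      · exact ⟨s₁, ⟨le_refl _, hst.le⟩, by rw [hm, min_eq_left h1, min_eq_left h2]⟩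
      · exact ⟨t₁, ⟨hst.le, le_refl _⟩, by rw [hm, min_eq_left h1, min_eq_right h2]⟩
    · exact ⟨h / g, hmem, by rw [hm, min_eq_right h1]⟩
  have hmemS : Real.arccos m ∈ {θ : ℝ | ∃ lam ∈ Set.Icc (0 : ℝ) 1,
      θ = Real.arccos ((1 + ((1 - lam) * s₁ + lam * t₁) - ((1 - lam) * s₂ + lam * t₂))
        / (2 * Real.sqrt ((1 - lam) * s₁ + lam * t₁)))} := by
    obtain ⟨r₀, ⟨hr₀1, hr₀2⟩, hcr⟩ := hattain
    refine ⟨(r₀ - s₁) / (t₁ - s₁), ⟨div_nonneg (by linarith) hts.le,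
      (div_le_one hts).2 (by linarith)⟩, ?_⟩
    have hreq : (1 - (r₀ - s₁) / (t₁ - s₁)) * s₁ + (r₀ - s₁) / (t₁ - s₁) * t₁ = r₀ := by
      field_simp
      ring
    rw [hid, hreq, ← hcdef, hcr]
  have hne : {θ : ℝ | ∃ lam ∈ Set.Icc (0 : ℝ) 1,
      θ = Real.arccos ((1 + ((1 - lam) * s₁ + lam * t₁) - ((1 - lam) * s₂ + lam * t₂))
        / (2 * Real.sqrt ((1 - lam) * s₁ + lam * t₁)))}.Nonempty :=
    ⟨_, 0, ⟨le_refl _, zero_le_one⟩, rfl⟩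
  exact le_antisymm (csSup_le hne hub) (le_csSup ⟨_, hub⟩ hmemS)
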